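/- Let γ ∈ (0,1), let 0 < Δ < 1/(2γ), and C > 0. Let T, Z : ℕ⁺ → ℕ⁺ → ℝ satisfy |T i j| < Δ/(ζ(3)·i³·j³) and |Z i j| < Δ/(ζ(3)·i³·j³) for all i, j ≥ 1, and let v : ℕ⁺ → ℝ satisfy |v j| ≤ C·j for all j ≥ 1. Define matrix products entrywise by (A·B) i j = ∑_{m=1}^∞ (A i m)·(B m j) (these series converge absolutely under the stated bounds), let T^0 be the identity matrix, and define F i j = ∑_{r=0}^∞ γ^r · (T^r·(T − Z)) i j. Then for every i ≥ 1 the series ∑_{j=1}^∞ (F i j)·(v j) converges absolutely and sup_{i≥1} |∑_{j=1}^∞ (F i j)·(v j)| < 4·C·Δ·ζ(2)/ζ(3). -/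

import Mathlib

/-!
Call `A` cube-bounded by `a` when `|A i j| ≤ a / (ζ(3) i³ j³)`. Since `∑ₘ 1/m⁶ ≤ ζ(3)`, a product
of matrices cube-bounded by `a` and `b` is cube-bounded by `a b`. Hence `Tʳ (T − Z)` is
cube-bounded by `2 Δ^(r+1)`, and summing the geometric series, `F` is cube-bounded by
`B = 2Δ / (1 − γΔ)`, and `B < 4Δ` because `γΔ < 1/2`. Against `|v j| ≤ C j`, the terms of row `i`
are at most `BC / (ζ(3) j²)`, which sum to `BC ζ(2) / ζ(3)`.
-/

/-- The Riemann zeta value ζ(2) = ∑_{n=1}^∞ 1/n². -/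
noncomputable def zeta2 : ℝ := ∑' n : ℕ+, 1 / (n : ℝ) ^ 2

/-- The Riemann zeta value ζ(3) = ∑_{n=1}^∞ 1/n³. -/
noncomputable def zeta3 : ℝ := ∑' n : ℕ+, 1 / (n : ℝ) ^ 3

/-- Entrywise product of infinite matrices: `(A·B) i j = ∑_{m=1}^∞ A i m · B m j`. -/
noncomputable def matMul (A B : ℕ+ → ℕ+ → ℝ) : ℕ+ → ℕ+ → ℝ :=
  fun i j => ∑' m : ℕ+, A i m * B m j

/-- Powers of an infinite matrix, with `T^0` the identity matrix. -/
noncomputable def matPow (T : ℕ+ → ℕ+ → ℝ) : ℕ → ℕ+ → ℕ+ → ℝ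
  | 0 => fun i j => if i = j then 1 else 0
  | r + 1 => matMul T (matPow T r)

lemma summable_one_div_pnat_pow {p : ℕ} (hp : 1 < p) :
    Summable fun n : ℕ+ => 1 / (n : ℝ) ^ p :=
  (Real.summable_one_div_nat_pow.mpr hp).comp_injective PNat.coe_injective

lemma zeta2_pos : 0 < zeta2 :=
  (summable_one_div_pnat_pow (by norm_num)).tsum_pos (fun _ => by positivity) 1 (by positivity)

lemma zeta3_pos : 0 < zeta3 :=
  (summable_one_div_pnat_pow (by norm_num)).tsum_pos (fun _ => by positivity) 1 (by positivity)

lemma matMul_matPow_zero_left (T B : ℕ+ → ℕ+ → ℝ) : matMul (matPow T 0) B = B := by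
  funext i j
  rw [matMul, tsum_eq_single i fun m hm => by simp [matPow, Ne.symm hm]]
  simp [matPow]

lemma matPow_one (T : ℕ+ → ℕ+ → ℝ) : matPow T 1 = T := by
  funext i j
  change ∑' m, T i m * matPow T 0 m j = T i j
  rw [tsum_eq_single j fun m hm => by simp [matPow, hm]]
  simp [matPow]

def CubeBounded (a : ℝ) (A : ℕ+ → ℕ+ → ℝ) : Prop :=
  ∀ i j : ℕ+, |A i j| ≤ a / (zeta3 * (i : ℝ) ^ 3 * (j : ℝ) ^ 3)

namespace CubeBounded

variable {a b : ℝ} {A B : ℕ+ → ℕ+ → ℝ}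

lemma nonneg (hA : CubeBounded a A) : 0 ≤ a := by
  have h : 0 ≤ a / zeta3 := by simpa using (abs_nonneg _).trans (hA 1 1)
  exact (div_nonneg_iff.mp h).elim And.left fun h' => absurd zeta3_pos h'.2.not_gt

lemma sub (hA : CubeBounded a A) (hB : CubeBounded b B) :
    CubeBounded (a + b) fun i j => A i j - B i j := fun i j =>
  calc |A i j - B i j| ≤ |A i j| + |B i j| := abs_sub _ _
    _ ≤ _ := by rw [add_div]; exact add_le_add (hA i j) (hB i j)

lemma const_mul (hA : CubeBounded a A) (c : ℝ) :
    CubeBounded (|c| * a) fun i j => c * A i j := fun i j => by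
  rw [abs_mul, mul_div_assoc]
  exact mul_le_mul_of_nonneg_left (hA i j) (abs_nonneg c)

lemma mul (hA : CubeBounded a A) (hB : CubeBounded b B) : CubeBounded (a * b) (matMul A B) := by
  intro i j
  have hz := zeta3_pos
  set c := a * b / (zeta3 ^ 2 * (i : ℝ) ^ 3 * (j : ℝ) ^ 3)
  have hc : 0 ≤ c := div_nonneg (mul_nonneg hA.nonneg hB.nonneg) (by positivity)
  have hterm : ∀ m : ℕ+, ‖A i m * B m j‖ ≤ c * (1 / (m : ℝ) ^ 3) := fun m => by
    have hm : (1 : ℝ) ≤ (m : ℝ) ^ 3 := one_le_pow₀ (Nat.one_le_cast.mpr m.pos)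
    calc ‖A i m * B m j‖ = |A i m| * |B m j| := by rw [Real.norm_eq_abs, abs_mul]
      _ ≤ a / (zeta3 * (i : ℝ) ^ 3 * (m : ℝ) ^ 3) * (b / (zeta3 * (m : ℝ) ^ 3 * (j : ℝ) ^ 3)) :=
        mul_le_mul (hA i m) (hB m j) (abs_nonneg _) ((abs_nonneg _).trans (hA i m))
      _ = c * (1 / (m : ℝ) ^ 3) * (1 / (m : ℝ) ^ 3) := by
        simp only [c]; field_simp
      _ ≤ c * (1 / (m : ℝ) ^ 3) :=
        mul_le_of_le_one_right (by positivity) ((div_le_one (by positivity)).mpr hm)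
  calc |matMul A B i j| ≤ c * zeta3 :=
        tsum_of_norm_bounded ((summable_one_div_pnat_pow (by norm_num)).hasSum.mul_left c) hterm
    _ = a * b / (zeta3 * (i : ℝ) ^ 3 * (j : ℝ) ^ 3) := by
        simp only [c]; field_simp

lemma matPow_succ {T : ℕ+ → ℕ+ → ℝ} (hT : CubeBounded a T) :
    ∀ r : ℕ, CubeBounded (a ^ (r + 1)) (matPow T (r + 1))
  | 0 => by simpa [matPow_one] using hT
  | r + 1 => by rw [pow_succ']; exact hT.mul (matPow_succ hT r)

lemma matPow_mul {T : ℕ+ → ℕ+ → ℝ} (hT : CubeBounded a T) (hB : CubeBounded b B) :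
    ∀ r : ℕ, CubeBounded (a ^ r * b) (matMul (matPow T r) B)
  | 0 => by simpa [matMul_matPow_zero_left] using hB
  | r + 1 => (hT.matPow_succ r).mul hB

lemma tsum_geometric {G : ℕ → ℕ+ → ℕ+ → ℝ} {c q : ℝ} (hq0 : 0 ≤ q) (hq1 : q < 1)
    (hG : ∀ r, CubeBounded (c * q ^ r) (G r)) :
    CubeBounded (c / (1 - q)) fun i j => ∑' r, G r i j := by
  intro i j
  set w := zeta3 * (i : ℝ) ^ 3 * (j : ℝ) ^ 3
  have hterm : ∀ r, ‖G r i j‖ ≤ c / w * q ^ r := fun r => by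
    rw [Real.norm_eq_abs, div_mul_eq_mul_div]; exact hG r i j
  calc |∑' r, G r i j| ≤ c / w * (1 - q)⁻¹ :=
        tsum_of_norm_bounded ((hasSum_geometric_of_lt_one hq0 hq1).mul_left _) hterm
    _ = c / (1 - q) / w := by ring

variable {v : ℕ+ → ℝ} {C : ℝ}

lemma abs_mul_le (hA : CubeBounded a A) (hv : ∀ j : ℕ+, |v j| ≤ C * (j : ℝ)) (i j : ℕ+) :
    ‖A i j * v j‖ ≤ a * C / zeta3 * (1 / (j : ℝ) ^ 2) := by
  have hz := zeta3_pos
  have ha := hA.nonneg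
  have hC : 0 ≤ C := by simpa using (abs_nonneg _).trans (hv 1)
  have hj : (0 : ℝ) < j := by exact_mod_cast j.pos
  have hi : (1 : ℝ) ≤ (i : ℝ) ^ 3 := one_le_pow₀ (Nat.one_le_cast.mpr i.pos)
  calc ‖A i j * v j‖ = |A i j| * |v j| := by rw [Real.norm_eq_abs, abs_mul]
    _ ≤ a / (zeta3 * (i : ℝ) ^ 3 * (j : ℝ) ^ 3) * (C * j) :=
      mul_le_mul (hA i j) (hv j) (abs_nonneg _) (by positivity)
    _ = a * C / zeta3 * (1 / (j : ℝ) ^ 2) * (1 / (i : ℝ) ^ 3) := by field_simp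
    _ ≤ a * C / zeta3 * (1 / (j : ℝ) ^ 2) :=
      mul_le_of_le_one_right (by positivity) ((div_le_one (by positivity)).mpr hi)

lemma summable_abs_mul (hA : CubeBounded a A) (hv : ∀ j : ℕ+, |v j| ≤ C * (j : ℝ)) (i : ℕ+) :
    Summable fun j => |A i j * v j| :=
  (((summable_one_div_pnat_pow (by norm_num)).mul_left _).of_norm_bounded
    (hA.abs_mul_le hv i)).abs

lemma abs_tsum_mul_le (hA : CubeBounded a A) (hv : ∀ j : ℕ+, |v j| ≤ C * (j : ℝ)) (i : ℕ+) :
    |∑' j, A i j * v j| ≤ a * C * zeta2 / zeta3 :=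
  (tsum_of_norm_bounded ((summable_one_div_pnat_pow (by norm_num)).hasSum.mul_left _)
    (hA.abs_mul_le hv i)).trans_eq (by rw [zeta2]; ring)

end CubeBounded

theorem stmt_7_general (γ Δ C : ℝ) (hγ0 : 0 < γ)
    (hΔ0 : 0 < Δ) (hΔ : Δ < 1 / (2 * γ)) (hC : 0 < C)
    (T Z : ℕ+ → ℕ+ → ℝ)
    (hT : ∀ i j : ℕ+, |T i j| < Δ / (zeta3 * (i : ℝ) ^ 3 * (j : ℝ) ^ 3))
    (hZ : ∀ i j : ℕ+, |Z i j| < Δ / (zeta3 * (i : ℝ) ^ 3 * (j : ℝ) ^ 3))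
    (v : ℕ+ → ℝ) (hv : ∀ j : ℕ+, |v j| ≤ C * (j : ℝ))
    (F : ℕ+ → ℕ+ → ℝ)
    (hF : ∀ i j : ℕ+,
      F i j = ∑' r : ℕ, γ ^ r * matMul (matPow T r) (fun i' j' => T i' j' - Z i' j') i j) :
    (∀ i : ℕ+, Summable fun j : ℕ+ => |F i j * v j|) ∧
    (⨆ i : ℕ+, |∑' j : ℕ+, F i j * v j|) < 4 * C * Δ * zeta2 / zeta3 := by
  have hγΔ : γ * Δ < 1 / 2 := by
    rw [lt_div_iff₀ (by positivity)] at hΔ; linarith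
  have hTb : CubeBounded Δ T := fun i j => (hT i j).le
  have hTZ : CubeBounded (Δ + Δ) fun i j => T i j - Z i j := hTb.sub fun i j => (hZ i j).le
  have hFb : CubeBounded ((Δ + Δ) / (1 - γ * Δ)) F := by
    rw [show F = _ from funext fun i => funext (hF i)]
    refine CubeBounded.tsum_geometric (by positivity) (by linarith) fun r => ?_
    convert (hTb.matPow_mul hTZ r).const_mul (γ ^ r) using 1
    rw [abs_of_pos (by positivity), mul_pow]; ring
  have hFΔ : (Δ + Δ) / (1 - γ * Δ) < 4 * Δ := by
    rw [div_lt_iff₀ (by linarith)]; nlinarith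
  refine ⟨hFb.summable_abs_mul hv, ?_⟩
  calc (⨆ i, |∑' j, F i j * v j|) ≤ (Δ + Δ) / (1 - γ * Δ) * C * zeta2 / zeta3 :=
        ciSup_le (hFb.abs_tsum_mul_le hv)
    _ < 4 * Δ * C * zeta2 / zeta3 := by
        have := zeta2_pos; have := zeta3_pos; gcongr
    _ = 4 * C * Δ * zeta2 / zeta3 := by ring

/-- For `γ ∈ (0,1)`, `0 < Δ < 1/(2γ)`, `C > 0`, infinite matrices `T, Z` with
`|T i j|, |Z i j| < Δ/(ζ(3)·i³·j³)`, a vector `v` with `|v j| ≤ C·j`, and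
`F i j = ∑_{r=0}^∞ γ^r (T^r·(T − Z)) i j`, for each `i` the series `∑_j (F i j)·(v j)`
converges absolutely and `sup_i |∑_j (F i j)·(v j)| < 4·C·Δ·ζ(2)/ζ(3)`. -/
theorem stmt_7 (γ Δ C : ℝ) (hγ0 : 0 < γ) (hγ1 : γ < 1)
    (hΔ0 : 0 < Δ) (hΔ : Δ < 1 / (2 * γ)) (hC : 0 < C)
    (T Z : ℕ+ → ℕ+ → ℝ)
    (hT : ∀ i j : ℕ+, |T i j| < Δ / (zeta3 * (i : ℝ) ^ 3 * (j : ℝ) ^ 3))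
    (hZ : ∀ i j : ℕ+, |Z i j| < Δ / (zeta3 * (i : ℝ) ^ 3 * (j : ℝ) ^ 3))
    (v : ℕ+ → ℝ) (hv : ∀ j : ℕ+, |v j| ≤ C * (j : ℝ))
    (F : ℕ+ → ℕ+ → ℝ)
    (hF : ∀ i j : ℕ+,
      F i j = ∑' r : ℕ, γ ^ r * matMul (matPow T r) (fun i' j' => T i' j' - Z i' j') i j) :
    (∀ i : ℕ+, Summable fun j : ℕ+ => |F i j * v j|) ∧
    (⨆ i : ℕ+, |∑' j : ℕ+, F i j * v j|) < 4 * C * Δ * zeta2 / zeta3 :=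
  stmt_7_general γ Δ C hγ0 hΔ0 hΔ hC T Z hT hZ v hv F hF
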